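/- Let V be a finite-dimensional real inner product space and g ⊆ so(V) a Lie subalgebra. Let T : V × V → V and R : V × V → g be alternating bilinear maps satisfying: (i) g-invariance: A(T(X,Y)) = T(AX,Y) + T(X,AY) and [A, R(X,Y)] = R(AX,Y) + R(X,AY) for all A ∈ g and X,Y ∈ V; (ii) the first Bianchi identity: R(X,Y)Z + R(Y,Z)X + R(Z,X)Y + T(T(X,Y),Z) + T(T(Y,Z),X) + T(T(Z,X),Y) = 0 for all X,Y,Z ∈ V; (iii) the second Bianchi identity: R(T(X,Y),Z) + R(T(Y,Z),X) + R(T(Z,X),Y) = 0 for all X,Y,Z ∈ V. Then the bracket on the vector space h := g ⊕ V defined by [(A,X),(B,Y)] := ([A,B] + R(X,Y), AY − BX − T(X,Y)) satisfies the Jacobi identity, so h is a Lie algebra containing g as a subalgebra. -/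

import Mathlib

/-!
The Jacobi identity for the bracket on `g ⊕ V` splits into a `g`-component and a `V`-component.
In each, the terms cubic in `g` cancel by the Jacobi identity of `g` (resp. because `V` is a
`g`-module), the mixed terms cancel by the `g`-invariance of `R` and `T` together with their
antisymmetry, and the terms purely in `V` are the second (resp. first) Bianchi identity.
-/

open scoped RealInnerProductSpace

attribute [local instance 100] LieRing.ofAssociativeRing

noncomputable section

/-- The bracket of the infinitesimal model on `h = g ⊕ V` built from a curvature `R`
and a torsion `T`:
`[(A,X),(B,Y)] = ([A,B] + R(X,Y), AY − BX − T(X,Y))`. -/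
def modelBracket {V : Type*} [NormedAddCommGroup V] [InnerProductSpace ℝ V]
    (R : V →ₗ[ℝ] V →ₗ[ℝ] Module.End ℝ V) (T : V →ₗ[ℝ] V →ₗ[ℝ] V) :
    (Module.End ℝ V × V) → (Module.End ℝ V × V) → (Module.End ℝ V × V) :=
  fun p q => (⁅p.1, q.1⁆ + R p.2 q.2, p.1 q.2 - q.1 p.2 - T p.2 q.2)

namespace LinearMap

variable {K L M N : Type*} [CommSemiring K] [LieRing L] [AddCommGroup M] [Module K M]
  [LieRingModule L M] [AddCommGroup N] [Module K N] [LieRingModule L N]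

def IsLieInvariant (Φ : M →ₗ[K] M →ₗ[K] N) (A : L) : Prop :=
  ∀ X Y, ⁅A, Φ X Y⁆ = Φ ⁅A, X⁆ Y + Φ X ⁅A, Y⁆

end LinearMap

section InfinitesimalModel

variable {K L M : Type*} [CommSemiring K] [LieRing L] [Module K L] [AddCommGroup M] [Module K M]
  [LieRingModule L M] (R : M →ₗ[K] M →ₗ[K] L) (T : M →ₗ[K] M →ₗ[K] M)

def infinitesimalModelBracket (p q : L × M) : L × M :=
  (⁅p.1, q.1⁆ + R p.2 q.2, ⁅p.1, q.2⁆ - ⁅q.1, p.2⁆ - T p.2 q.2)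

local notation "⁅" p ", " q "⁆ₕ" => infinitesimalModelBracket R T p q

variable {R T} {A B C : L}

theorem infinitesimalModelBracket_jacobi_fst (hR : R.IsAlt)
    (hA : R.IsLieInvariant A) (hB : R.IsLieInvariant B) (hC : R.IsLieInvariant C)
    (hB2 : ∀ X Y Z, R (T X Y) Z + R (T Y Z) X + R (T Z X) Y = 0) (X Y Z : M) :
    (⁅⁅(A, X), (B, Y)⁆ₕ, (C, Z)⁆ₕ + ⁅⁅(B, Y), (C, Z)⁆ₕ, (A, X)⁆ₕ
      + ⁅⁅(C, Z), (A, X)⁆ₕ, (B, Y)⁆ₕ).1 = 0 := by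
  have jacobi := lie_jacobi A B C
  simp only [infinitesimalModelBracket, Prod.fst_add, add_lie, map_sub, LinearMap.sub_apply]
  rw [← lie_skew ⁅A, B⁆ C, ← lie_skew ⁅B, C⁆ A, ← lie_skew ⁅C, A⁆ B,
    ← lie_skew (R X Y), ← lie_skew (R Y Z), ← lie_skew (R Z X),
    hC X Y, hA Y Z, hB Z X, ← hR.neg ⁅C, Y⁆, ← hR.neg ⁅A, Z⁆, ← hR.neg ⁅B, X⁆]
  linear_combination (norm := abel) -jacobi - hB2 X Y Z

theorem infinitesimalModelBracket_jacobi_snd (hT : T.IsAlt)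
    (hA : T.IsLieInvariant A) (hB : T.IsLieInvariant B) (hC : T.IsLieInvariant C)
    (hB1 : ∀ X Y Z : M, ⁅R X Y, Z⁆ + ⁅R Y Z, X⁆ + ⁅R Z X, Y⁆
      + T (T X Y) Z + T (T Y Z) X + T (T Z X) Y = 0) (X Y Z : M) :
    (⁅⁅(A, X), (B, Y)⁆ₕ, (C, Z)⁆ₕ + ⁅⁅(B, Y), (C, Z)⁆ₕ, (A, X)⁆ₕ
      + ⁅⁅(C, Z), (A, X)⁆ₕ, (B, Y)⁆ₕ).2 = 0 := by
  simp only [infinitesimalModelBracket, Prod.snd_add, add_lie, lie_lie, lie_sub, map_sub,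
    LinearMap.sub_apply]
  rw [hC X Y, hA Y Z, hB Z X, ← hT.neg ⁅C, Y⁆, ← hT.neg ⁅A, Z⁆, ← hT.neg ⁅B, X⁆]
  linear_combination (norm := abel) hB1 X Y Z

theorem infinitesimalModelBracket_jacobi (hR : R.IsAlt) (hT : T.IsAlt)
    (hRA : R.IsLieInvariant A) (hRB : R.IsLieInvariant B) (hRC : R.IsLieInvariant C)
    (hTA : T.IsLieInvariant A) (hTB : T.IsLieInvariant B) (hTC : T.IsLieInvariant C)
    (hB1 : ∀ X Y Z : M, ⁅R X Y, Z⁆ + ⁅R Y Z, X⁆ + ⁅R Z X, Y⁆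
      + T (T X Y) Z + T (T Y Z) X + T (T Z X) Y = 0)
    (hB2 : ∀ X Y Z, R (T X Y) Z + R (T Y Z) X + R (T Z X) Y = 0) (X Y Z : M) :
    ⁅⁅(A, X), (B, Y)⁆ₕ, (C, Z)⁆ₕ + ⁅⁅(B, Y), (C, Z)⁆ₕ, (A, X)⁆ₕ
      + ⁅⁅(C, Z), (A, X)⁆ₕ, (B, Y)⁆ₕ = 0 :=
  Prod.ext (infinitesimalModelBracket_jacobi_fst hR hRA hRB hRC hB2 X Y Z)
    (infinitesimalModelBracket_jacobi_snd hT hTA hTB hTC hB1 X Y Z)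

end InfinitesimalModel

theorem infinitesimal_model_jacobi_general
    {V : Type*} [NormedAddCommGroup V] [InnerProductSpace ℝ V]
    (g : LieSubalgebra ℝ (Module.End ℝ V))
    (T : V →ₗ[ℝ] V →ₗ[ℝ] V) (R : V →ₗ[ℝ] V →ₗ[ℝ] Module.End ℝ V)
    (hTalt : ∀ X : V, T X X = 0)
    (hRalt : ∀ X : V, R X X = 0)
    (hRg : ∀ X Y : V, R X Y ∈ g)
    (hTinvt : ∀ A ∈ g, ∀ X Y : V, A (T X Y) = T (A X) Y + T X (A Y))
    (hRinvt : ∀ A ∈ g, ∀ X Y : V, ⁅A, R X Y⁆ = R (A X) Y + R X (A Y))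
    (hB1 : ∀ X Y Z : V,
      R X Y Z + R Y Z X + R Z X Y + T (T X Y) Z + T (T Y Z) X + T (T Z X) Y = 0)
    (hB2 : ∀ X Y Z : V, R (T X Y) Z + R (T Y Z) X + R (T Z X) Y = 0) :
    (∀ A ∈ g, ∀ B ∈ g, ∀ X Y : V, (modelBracket R T (A, X) (B, Y)).1 ∈ g) ∧
    (∀ A ∈ g, ∀ B ∈ g, ∀ C ∈ g, ∀ X Y Z : V,
      modelBracket R T (modelBracket R T (A, X) (B, Y)) (C, Z) +
      modelBracket R T (modelBracket R T (B, Y) (C, Z)) (A, X) +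
      modelBracket R T (modelBracket R T (C, Z) (A, X)) (B, Y) = 0) := by
  refine ⟨fun A hA B hB X Y ↦ g.add_mem (g.lie_mem hA hB) (hRg X Y), ?_⟩
  intro A hA B hB C hC X Y Z
  -- `modelBracket` is `infinitesimalModelBracket` for `L = End V`, as `⁅A, X⁆ = A X` is `rfl`.
  exact infinitesimalModelBracket_jacobi hRalt hTalt (hRinvt A hA) (hRinvt B hB) (hRinvt C hC)
    (hTinvt A hA) (hTinvt B hB) (hTinvt C hC) hB1 hB2 X Y Z

/-- Given `g`-invariant alternating maps `T : V × V → V` and `R : V × V → g`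
satisfying the first and second Bianchi identities, the bracket on `h = g ⊕ V`
closes on `g ⊕ V` and satisfies the Jacobi identity, so `h` is a Lie algebra
containing `g` as a subalgebra. -/
theorem infinitesimal_model_jacobi
    {V : Type*} [NormedAddCommGroup V] [InnerProductSpace ℝ V] [FiniteDimensional ℝ V]
    (g : LieSubalgebra ℝ (Module.End ℝ V))
    (hskew : ∀ A ∈ g, ∀ x y : V, ⟪A x, y⟫ = -⟪x, A y⟫)
    (T : V →ₗ[ℝ] V →ₗ[ℝ] V) (R : V →ₗ[ℝ] V →ₗ[ℝ] Module.End ℝ V)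
    (hTalt : ∀ X : V, T X X = 0)
    (hRalt : ∀ X : V, R X X = 0)
    (hRg : ∀ X Y : V, R X Y ∈ g)
    (hTinvt : ∀ A ∈ g, ∀ X Y : V, A (T X Y) = T (A X) Y + T X (A Y))
    (hRinvt : ∀ A ∈ g, ∀ X Y : V, ⁅A, R X Y⁆ = R (A X) Y + R X (A Y))
    (hB1 : ∀ X Y Z : V,
      R X Y Z + R Y Z X + R Z X Y + T (T X Y) Z + T (T Y Z) X + T (T Z X) Y = 0)
    (hB2 : ∀ X Y Z : V, R (T X Y) Z + R (T Y Z) X + R (T Z X) Y = 0) :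
    (∀ A ∈ g, ∀ B ∈ g, ∀ X Y : V, (modelBracket R T (A, X) (B, Y)).1 ∈ g) ∧
    (∀ A ∈ g, ∀ B ∈ g, ∀ C ∈ g, ∀ X Y Z : V,
      modelBracket R T (modelBracket R T (A, X) (B, Y)) (C, Z) +
      modelBracket R T (modelBracket R T (B, Y) (C, Z)) (A, X) +
      modelBracket R T (modelBracket R T (C, Z) (A, X)) (B, Y) = 0) :=
  infinitesimal_model_jacobi_general g T R hTalt hRalt hRg hTinvt hRinvt hB1 hB2

end
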